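/- Let T be a tree with ℓ ≥ 2 leaves. Then T is 2-sparse if and only if P(T) = ℓ − 1. -/

import Mathlib

namespace PaperPC

open SimpleGraph

variable {V : Type*}

/-- The degree of a vertex, via the cardinality of its neighbor set. -/
noncomputable def ndeg (G : SimpleGraph V) (v : V) : ℕ := (G.neighborSet v).ncard

/-- A linear forest: an acyclic graph of maximum degree at most 2,
i.e. a vertex-disjoint union of paths.  A spanning linear subforest of `G`
is exactly a path covering of `G` (isolated vertices are one-vertex paths). -/
def IsLinearForest (H : SimpleGraph V) : Prop :=
  H.IsAcyclic ∧ ∀ v, ndeg H v ≤ 2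

/-- The number of paths of a path covering = number of connected components. -/
noncomputable def numPaths (H : SimpleGraph V) : ℕ := Nat.card H.ConnectedComponent

/-- The path covering number `P(G)`. -/
noncomputable def pathCoverNumber (G : SimpleGraph V) : ℕ :=
  sInf {k | ∃ H ≤ G, IsLinearForest H ∧ numPaths H = k}

/-- `H` is a minimum path covering of `G`. -/
def IsMinPathCover (G H : SimpleGraph V) : Prop :=
  H ≤ G ∧ IsLinearForest H ∧ numPaths H = pathCoverNumber G

open scoped Classical in
/-- The path sequence of a path covering: the multiset of the numbers of vertices
of its paths (a multiset encodes the nondecreasing ordered sequence). -/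
noncomputable def pathSeq [Fintype V] (H : SimpleGraph V) : Multiset ℕ :=
  (Finset.univ : Finset H.ConnectedComponent).val.map fun c => c.supp.ncard

/-- `G` admits a unique path sequence. -/
def UniquePathSequence [Fintype V] (G : SimpleGraph V) : Prop :=
  ∀ H₁ H₂ : SimpleGraph V, IsMinPathCover G H₁ → IsMinPathCover G H₂ →
    pathSeq H₁ = pathSeq H₂

/-- Number of leaves (vertices of degree 1). -/
noncomputable def numLeaves (G : SimpleGraph V) : ℕ := {v | ndeg G v = 1}.ncard

/-- Number of heavy edges (edges both of whose endpoints have degree > 2). -/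
noncomputable def numHeavyEdges (G : SimpleGraph V) : ℕ :=
  {e ∈ G.edgeSet | ∀ v ∈ e, 2 < ndeg G v}.ncard

/-- Number of edges. -/
noncomputable def numEdges (G : SimpleGraph V) : ℕ := G.edgeSet.ncard

/-- A graph is 2-sparse if no two adjacent vertices both have degree > 2. -/
def TwoSparse (G : SimpleGraph V) : Prop :=
  ∀ u v, G.Adj u v → ndeg G u ≤ 2 ∨ ndeg G v ≤ 2

/-- `G` is a path graph. -/
def IsPathGraph (G : SimpleGraph V) : Prop := G.IsTree ∧ ∀ v, ndeg G v ≤ 2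

/-- `G` is a cycle graph. -/
def IsCycleGraph (G : SimpleGraph V) : Prop := G.Connected ∧ ∀ v, ndeg G v = 2

/-- A generalized star: a tree with exactly one heavy vertex (the center) in which
all vines have the same number of vertices (equivalently, all leaves are at the same
distance from the center). -/
def IsGenStar (G : SimpleGraph V) : Prop :=
  G.IsTree ∧ ∃ c k, 2 < ndeg G c ∧ (∀ v, v ≠ c → ndeg G v ≤ 2) ∧
    ∀ v, ndeg G v = 1 → G.dist c v = k

/-- An L(2,1)-labeling. -/
def IsL21Labeling (G : SimpleGraph V) (f : V → ℕ) : Prop :=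
  (∀ u v, G.Adj u v → 2 ≤ Nat.dist (f u) (f v)) ∧
  (∀ u v, G.dist u v = 2 → 1 ≤ Nat.dist (f u) (f v))

/-- `λ(G)`: the least `k` such that `G` has an L(2,1)-labeling with labels in `{0,…,k}`. -/
noncomputable def lambdaNum (G : SimpleGraph V) : ℕ :=
  sInf {k | ∃ f : V → ℕ, IsL21Labeling G f ∧ ∀ v, f v ≤ k}

/-- A λ-labeling: an L(2,1)-labeling with maximum label `λ(G)`. -/
def IsLambdaLabeling (G : SimpleGraph V) (f : V → ℕ) : Prop :=
  IsL21Labeling G f ∧ (∀ v, f v ≤ lambdaNum G) ∧ ∃ v, f v = lambdaNum G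

/-- The set of holes of a labeling: unused labels `h` with `1 ≤ h ≤ λ(G) - 1`. -/
def labHoles (G : SimpleGraph V) (f : V → ℕ) : Set ℕ :=
  {h | 1 ≤ h ∧ h + 1 ≤ lambdaNum G ∧ ∀ v, f v ≠ h}

/-- The hole index `ρ(G)`: minimum number of holes over all λ-labelings. -/
noncomputable def holeIndex (G : SimpleGraph V) : ℕ :=
  sInf {k | ∃ f : V → ℕ, IsLambdaLabeling G f ∧ (labHoles G f).ncard = k}

open scoped Classical in
/-- The island sequence of a labeling: the multiset of cardinalities of the maximal
intervals `[a,b]` of consecutive integers all used by the labeling. -/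
noncomputable def islandSeq [Fintype V] (G : SimpleGraph V) (f : V → ℕ) : Multiset ℕ :=
  (((Finset.range (lambdaNum G + 1)) ×ˢ (Finset.range (lambdaNum G + 1))).filter
    (fun q => q.1 ≤ q.2 ∧ (∀ x ∈ Finset.Icc q.1 q.2, ∃ v, f v = x) ∧
      (q.1 = 0 ∨ ∀ v, f v ≠ q.1 - 1) ∧ ∀ v, f v ≠ q.2 + 1)).val.map
    fun q => q.2 - q.1 + 1

/-- `G` admits (at least) two distinct island sequences. -/
def MultipleIslandSequences [Fintype V] (G : SimpleGraph V) : Prop :=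
  ∃ f g : V → ℕ, IsLambdaLabeling G f ∧ IsLambdaLabeling G g ∧
    (labHoles G f).ncard = holeIndex G ∧ (labHoles G g).ncard = holeIndex G ∧
    islandSeq G f ≠ islandSeq G g

/-- A vine: a maximal path one of whose endpoints (`a`) is a leaf and all of whose
vertices are light.  Maximality: any light vertex adjacent to the other end already
lies on the path. -/
def IsVine (G : SimpleGraph V) {a b : V} (p : G.Walk a b) : Prop :=
  p.IsPath ∧ ndeg G a = 1 ∧ (∀ v ∈ p.support, ndeg G v ≤ 2) ∧
  ∀ c, G.Adj b c → ndeg G c ≤ 2 → c ∈ p.support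

/-- A vine with center `v`: the (heavy) vertex adjacent to the non-leaf end of the vine. -/
def IsVineWithCenter (G : SimpleGraph V) {a b : V} (p : G.Walk a b) (v : V) : Prop :=
  IsVine G p ∧ G.Adj b v ∧ 2 < ndeg G v

/-- The matching number of the subgraph of `G` induced by `S`. -/
noncomputable def matchingNumberOn (G : SimpleGraph V) (S : Set V) : ℕ :=
  sSup {k | ∃ M : Set (Sym2 V), M ⊆ G.edgeSet ∧ (∀ e ∈ M, ∀ v ∈ e, v ∈ S) ∧
    (∀ e ∈ M, ∀ f ∈ M, e ≠ f → ∀ v, v ∈ e → v ∉ f) ∧ M.ncard = k}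

/-- Labels used in the family `F`: `A`, or `B k` where `k` records the number of
vertices of each vine of the labeled generalized star that produced the label. -/
inductive Lab | A | B (k : ℕ)

/-- A labeled generalized star with center `c` whose vines have `k` vertices each
(equivalently, every leaf is at distance `k` from `c`); the degenerate case
`deg c = 2` is the convention regarding a path of length `2k` as a labeled
generalized star with two vines.  The neighbors of the center are labeled `B k`,
the other non-leaf vertices (and the center) are labeled `A`, leaves are unlabeled. -/
def IsLGenStar {W : Type*} (H : SimpleGraph W) (c : W) (k : ℕ)
    (lab : W → Option Lab) : Prop :=
  H.IsTree ∧ 2 ≤ ndeg H c ∧ (∀ v, v ≠ c → ndeg H v ≤ 2) ∧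
  (∀ v, ndeg H v = 1 → H.dist c v = k) ∧
  lab c = some Lab.A ∧
  (∀ v, H.Adj c v → lab v = some (Lab.B k)) ∧
  (∀ v, v ≠ c → ¬H.Adj c v → ndeg H v = 1 → lab v = none) ∧
  (∀ v, v ≠ c → ¬H.Adj c v → 2 ≤ ndeg H v → lab v = some Lab.A)

/-- A labeled path: a path with at least three vertices, non-leaf vertices labeled `A`. -/
def IsLPath {W : Type*} (H : SimpleGraph W) (lab : W → Option Lab) : Prop :=
  H.IsTree ∧ (∀ v, ndeg H v ≤ 2) ∧ 3 ≤ Nat.card W ∧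
  (∀ v, ndeg H v = 1 → lab v = none) ∧
  ∀ v, 2 ≤ ndeg H v → lab v = some Lab.A

/-- The induced subgraph of `T` on `s` is a labeled generalized star. -/
def LGenStarOn (T : SimpleGraph V) (s : Set V) (c : V) (k : ℕ)
    (lab : V → Option Lab) : Prop :=
  ∃ hc : c ∈ s, IsLGenStar (T.induce s) ⟨c, hc⟩ k fun v => lab v.1

/-- The induced subgraph of `T` on `s` is a labeled path. -/
def LPathOn (T : SimpleGraph V) (s : Set V) (lab : V → Option Lab) : Prop :=
  IsLPath (T.induce s) fun v => lab v.1

/-- The family `F` of labeled trees, realized as induced subgraphs (on vertex sets `s`)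
of an ambient graph `T`:  start from a labeled generalized star with at least three
vines or from a labeled path, and repeatedly attach, via a single new edge, a labeled
generalized star with at least three vines at a vertex labeled `A` (Type-1), a labeled
path by one of its non-leaf vertices at a vertex labeled `A` (Type-2), or a labeled
generalized star whose vines have the same number of vertices `k` as those of the star
that labeled `u` with `B k`, at a vertex `u` labeled `B k` (Type-3). -/
inductive InF (T : SimpleGraph V) : Set V → (V → Option Lab) → Prop
  | base_star (s : Set V) (c : V) (k : ℕ) (lab : V → Option Lab) :
      LGenStarOn T s c k lab → 3 ≤ {w ∈ s | T.Adj c w}.ncard → InF T s lab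
  | base_path (s : Set V) (lab : V → Option Lab) :
      LPathOn T s lab → InF T s lab
  | type1 (s : Set V) (lab : V → Option Lab) (t : Set V) (lab' : V → Option Lab)
      (u c : V) (k : ℕ) :
      InF T s lab → Disjoint s t → u ∈ s → c ∈ t → lab u = some Lab.A →
      LGenStarOn T t c k lab' → 3 ≤ {w ∈ t | T.Adj c w}.ncard →
      (∀ x ∈ s, ∀ y ∈ t, (T.Adj x y ↔ x = u ∧ y = c)) →
      (∀ x ∈ s, lab' x = lab x) →
      InF T (s ∪ t) lab'
  | type2 (s : Set V) (lab : V → Option Lab) (t : Set V) (lab' : V → Option Lab)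
      (u v : V) :
      InF T s lab → Disjoint s t → u ∈ s → v ∈ t → lab u = some Lab.A →
      LPathOn T t lab' → 2 ≤ {w ∈ t | T.Adj v w}.ncard →
      (∀ x ∈ s, ∀ y ∈ t, (T.Adj x y ↔ x = u ∧ y = v)) →
      (∀ x ∈ s, lab' x = lab x) →
      InF T (s ∪ t) lab'
  | type3 (s : Set V) (lab : V → Option Lab) (t : Set V) (lab' : V → Option Lab)
      (u c : V) (k : ℕ) :
      InF T s lab → Disjoint s t → u ∈ s → c ∈ t → lab u = some (Lab.B k) →
      LGenStarOn T t c k lab' →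
      (∀ x ∈ s, ∀ y ∈ t, (T.Adj x y ↔ x = u ∧ y = c)) →
      (∀ x ∈ s, lab' x = lab x) →
      InF T (s ∪ t) lab'

/-- `G` is obtained from the tree `T` by expanding each edge of `T` into a complete
graph of arbitrary order: there is an embedding `ι` of the vertices of `T` and an
assignment `b` of a block of vertices of `G` to each edge of `T` such that an original
vertex lies in the block of an edge iff it is an endpoint of that edge, blocks of
distinct edges meet only in original vertices, every vertex of `G` lies in some block,
and two distinct vertices of `G` are adjacent iff they lie in a common block. -/
def IsBlockExpansion {U W : Type*} (T : SimpleGraph U) (G : SimpleGraph W) : Prop :=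
  ∃ (ι : U ↪ W) (b : Sym2 U → Set W),
    (∀ (u : U), ∀ e ∈ T.edgeSet, (ι u ∈ b e ↔ u ∈ e)) ∧
    (∀ e ∈ T.edgeSet, ∀ f ∈ T.edgeSet, e ≠ f → b e ∩ b f ⊆ Set.range ι) ∧
    (∀ w : W, ∃ e ∈ T.edgeSet, w ∈ b e) ∧
    (∀ x y : W, G.Adj x y ↔ x ≠ y ∧ ∃ e ∈ T.edgeSet, x ∈ b e ∧ y ∈ b e)

/-! A path covering of a forest `G` on `n` vertices is obtained by deleting edges, and it has
`n - |E(G)| + d` paths when `d` edges are deleted. A vertex `v` must lose at least `deg v - 2`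
edges (truncated subtraction), and deleting that many at every vertex suffices, so
`P(G) ≤ n - |E(G)| + Σ (deg v - 2)`. If no edge joins two heavy vertices, the edges lost at
distinct heavy vertices are distinct, which gives equality; if a heavy edge exists, deleting it
first lowers the sum by two at the cost of one path. For a tree `n - |E| = 1`, and handshaking
gives `Σ (deg v - 2) = ℓ - 2`. -/

end PaperPC

open Finset

namespace SimpleGraph

variable {V : Type*} {G H : SimpleGraph V}

lemma ConnectedComponent.degree_toSimpleGraph (c : G.ConnectedComponent) (x : c)
    [Fintype (c.toSimpleGraph.neighborSet x)] [Fintype (G.neighborSet x)] :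
    c.toSimpleGraph.degree x = G.degree x := by
  rw [← card_neighborSet_eq_degree, ← card_neighborSet_eq_degree]
  exact Fintype.card_congr
    { toFun y := ⟨y.1.1, y.2⟩
      invFun y := ⟨⟨y.1, c.mem_supp_of_adj_mem_supp x.2 y.2⟩, y.2⟩ }

variable [Fintype V]

lemma IsAcyclic.sum_degree_add_two_mul_card_connectedComponent [DecidableRel G.Adj]
    (hG : G.IsAcyclic) :
    ∑ v, G.degree v + 2 * Nat.card G.ConnectedComponent = 2 * Fintype.card V := by
  classical
  -- each component is a tree, so its degrees sum to twice its number of vertices minus two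
  have hcomp (c : G.ConnectedComponent) :
      ∑ v with G.connectedComponentMk v = c, G.degree v + 2 =
        2 * #{v | G.connectedComponentMk v = c} := by
    have hmem (v : V) : v ∈ ({v | G.connectedComponentMk v = c} : Finset V) ↔ v ∈ c := by
      simp only [mem_filter, mem_univ, true_and]
      rfl
    have hsum := c.toSimpleGraph.sum_degrees_eq_twice_card_edges
    have hedges := (hG.isTree_connectedComponent c).card_edgeFinset
    simp only [c.degree_toSimpleGraph] at hsum
    rw [Fintype.card_of_subtype _ hmem] at hedges
    rw [← Finset.sum_subtype _ hmem (fun v => G.degree v)] at hsum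
    omega
  have := Fintype.ofFinite G.ConnectedComponent
  have hsum := Finset.sum_congr rfl fun c (_ : c ∈ univ) => hcomp c
  rw [sum_add_distrib, sum_fiberwise univ G.connectedComponentMk fun v => G.degree v,
    ← mul_sum, ← card_eq_sum_card_fiberwise (f := G.connectedComponentMk) (s := univ)
      (t := univ) (by simp),
    sum_const, card_univ, card_univ, smul_eq_mul] at hsum
  rw [Nat.card_eq_fintype_card]
  omega

lemma IsAcyclic.card_connectedComponent_add_card_edgeFinset [DecidableRel G.Adj]
    (hG : G.IsAcyclic) :
    Nat.card G.ConnectedComponent + #G.edgeFinset = Fintype.card V := by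
  have := hG.sum_degree_add_two_mul_card_connectedComponent
  rw [sum_degrees_eq_twice_card_edges] at this
  omega

lemma exists_deleteEdges_degree_le_two [DecidableEq V] [DecidableRel G.Adj] :
    ∃ D ⊆ G.edgeFinset, #D ≤ ∑ v, (G.degree v - 2) ∧
      ∀ v, (G.deleteEdges D).degree v ≤ 2 := by
  choose S hS hcard using fun v =>
    exists_subset_card_eq (s := G.neighborFinset v) (n := G.degree v - 2) (by simp)
  set D : Finset (Sym2 V) := univ.biUnion fun v => (S v).image (s(v, ·))
  refine ⟨D, ?_, ?_, fun v => ?_⟩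
  · simp only [D, biUnion_subset, image_subset_iff, mem_edgeFinset, mem_edgeSet]
    exact fun v _ w hw => (G.mem_neighborFinset v w).mp (hS v hw)
  · exact card_biUnion_le.trans (sum_le_sum fun v _ => card_image_le.trans (hcard v).le)
  · have hsub : (G.deleteEdges D).neighborFinset v ⊆ G.neighborFinset v \ S v := by
      intro w
      simp only [mem_neighborFinset, deleteEdges_adj, mem_sdiff, mem_coe, D, mem_biUnion,
        mem_image]
      exact fun ⟨hvw, hD⟩ => ⟨hvw, fun hw => hD ⟨v, mem_univ v, w, hw, rfl⟩⟩
    have := card_le_card hsub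
    rw [card_sdiff_of_subset (hS v), hcard, card_neighborFinset_eq_degree,
      card_neighborFinset_eq_degree] at this
    omega

lemma IsIndepSet.sum_degree_le_card_edgeFinset [DecidableRel G.Adj] {I : Finset V}
    (hI : G.IsIndepSet I) : ∑ v ∈ I, G.degree v ≤ #G.edgeFinset := by
  classical
  have hdisj : (I : Set V).PairwiseDisjoint fun v => G.incidenceFinset v := by
    intro v hv w hw hvw
    refine Finset.disjoint_left.mpr fun e hev hew => hI hv hw hvw ?_
    exact G.adj_of_mem_incidenceSet hvw ((G.mem_incidenceFinset v e).mp hev)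
      ((G.mem_incidenceFinset w e).mp hew)
  simp_rw [← card_incidenceFinset_eq_degree]
  rw [← card_biUnion hdisj]
  exact card_le_card (biUnion_subset.mpr fun v _ => G.incidenceFinset_subset v)

lemma IsIndepSet.sum_degree_sub_le_card_edgeFinset_sub [DecidableRel G.Adj] [DecidableRel H.Adj]
    {I : Finset V} (hI : G.IsIndepSet I) (hle : H ≤ G) :
    ∑ v ∈ I, (G.degree v - H.degree v) ≤ #G.edgeFinset - #H.edgeFinset := by
  classical
  have hdeg (v : V) : (G \ H).degree v = G.degree v - H.degree v := by
    simp only [← card_neighborFinset_eq_degree, neighborFinset_sdiff]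
    exact card_sdiff_of_subset fun w hw => by simpa using hle (by simpa using hw)
  have hI' : (G \ H).IsIndepSet I := Set.Pairwise.mono' (fun _ _ h hadj => h hadj.1) hI
  convert hI'.sum_degree_le_card_edgeFinset using 1
  · simp only [hdeg]
  · rw [← card_sdiff_of_subset (edgeFinset_mono hle)]
    congr 1
    ext
    simp

lemma sum_degree_deleteEdges_sub_two_add_two_le [DecidableEq V] [DecidableRel G.Adj] {u v : V}
    (huv : G.Adj u v) (hu : 2 < G.degree u) (hv : 2 < G.degree v) :
    ∑ w, ((G.deleteEdges {s(u, v)}).degree w - 2) + 2 ≤ ∑ w, (G.degree w - 2) := by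
  set G' := G.deleteEdges {s(u, v)}
  have hle (w : V) : G'.degree w ≤ G.degree w := degree_le_of_le (deleteEdges_le _)
  have hlt {x y : V} (hxy : s(x, y) = s(u, v)) (hadj : G.Adj x y) : G'.degree x < G.degree x := by
    simp only [← card_neighborFinset_eq_degree]
    refine card_lt_card ⟨fun w hw => ?_, fun h => ?_⟩
    · simp only [mem_neighborFinset, G', deleteEdges_adj] at hw ⊢
      exact hw.1
    · have := h ((G.mem_neighborFinset x y).mpr hadj)
      simp [G', hxy] at this
  have hpoint (w : V) : (G'.degree w - 2) + ((if u = w then 1 else 0) + (if v = w then 1 else 0))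
      ≤ G.degree w - 2 := by
    rcases eq_or_ne u w with rfl | hwu
    · rw [if_pos rfl, if_neg huv.ne']
      have := hlt rfl huv
      omega
    rcases eq_or_ne v w with rfl | hwv
    · rw [if_neg hwu, if_pos rfl]
      have := hlt Sym2.eq_swap huv.symm
      omega
    rw [if_neg hwu, if_neg hwv]
    have := hle w
    omega
  have := sum_le_sum fun w (_ : w ∈ univ) => hpoint w
  rw [sum_add_distrib, sum_add_distrib, sum_ite_eq, sum_ite_eq] at this
  simpa [add_assoc] using this

lemma card_edgeFinset_deleteEdges_add_one [DecidableEq V] [DecidableRel G.Adj] {u v : V}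
    (huv : G.Adj u v) : #(G.deleteEdges {s(u, v)}).edgeFinset + 1 = #G.edgeFinset := by
  have : (G.deleteEdges {s(u, v)}).edgeFinset = G.edgeFinset.erase s(u, v) := by
    ext
    simp [and_comm]
  rw [this, card_erase_add_one (G.mem_edgeFinset.mpr huv)]

lemma IsTree.sum_degree_sub_two_add_two [DecidableRel G.Adj] [Nontrivial V] (hG : G.IsTree) :
    ∑ v, (G.degree v - 2) + 2 = #{v | G.degree v = 1} := by
  have hpos (v : V) : 0 < G.degree v := by
    obtain ⟨w, hw⟩ := hG.connected.preconnected.exists_adj_of_nontrivial v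
    exact G.degree_pos_iff_exists_adj v |>.mpr ⟨w, hw⟩
  have hpointwise (v : V) : G.degree v - 2 + 2 = G.degree v + if G.degree v = 1 then 1 else 0 := by
    have := hpos v
    split_ifs <;> omega
  have hsum := Finset.sum_congr rfl fun v (_ : v ∈ univ) => hpointwise v
  rw [sum_add_distrib, sum_add_distrib, sum_degrees_eq_twice_card_edges, ← card_filter,
    sum_const, card_univ, smul_eq_mul] at hsum
  have := hG.card_edgeFinset
  omega

end SimpleGraph

namespace PaperPC

open SimpleGraph

variable {V : Type*} {G H : SimpleGraph V}

lemma ndeg_eq_degree (G : SimpleGraph V) (v : V) [Fintype (G.neighborSet v)] :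
    ndeg G v = G.degree v := by
  rw [ndeg, ← card_neighborSet_eq_degree, Set.ncard_eq_toFinset_card', Set.toFinset_card]

lemma isLinearForest_bot : IsLinearForest (⊥ : SimpleGraph V) :=
  ⟨isAcyclic_bot, fun v => by simp [ndeg]⟩

lemma pathCoverNumber_le_numPaths (hle : H ≤ G) (hH : IsLinearForest H) :
    pathCoverNumber G ≤ numPaths H :=
  Nat.sInf_le ⟨H, hle, hH, rfl⟩

lemma exists_isMinPathCover (G : SimpleGraph V) : ∃ H, IsMinPathCover G H :=
  Nat.sInf_mem (s := {k | ∃ H ≤ G, IsLinearForest H ∧ numPaths H = k})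
    ⟨_, ⊥, bot_le, isLinearForest_bot, rfl⟩

lemma pathCoverNumber_anti (hle : H ≤ G) : pathCoverNumber G ≤ pathCoverNumber H := by
  obtain ⟨F, hF, hlf, hP⟩ := exists_isMinPathCover H
  exact hP ▸ pathCoverNumber_le_numPaths (hF.trans hle) hlf

variable [Fintype V]

lemma numLeaves_eq_card_filter (G : SimpleGraph V) [DecidableRel G.Adj] :
    numLeaves G = #{v | G.degree v = 1} := by
  simp only [numLeaves, ndeg_eq_degree, ← Set.ncard_coe_finset, coe_filter, mem_univ, true_and]

lemma IsLinearForest.numPaths_add_card_edgeFinset [DecidableRel H.Adj] (hH : IsLinearForest H) :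
    numPaths H + #H.edgeFinset = Fintype.card V :=
  IsAcyclic.card_connectedComponent_add_card_edgeFinset hH.1

lemma pathCoverNumber_add_card_edgeFinset_le [DecidableRel G.Adj] (hG : G.IsAcyclic) :
    pathCoverNumber G + #G.edgeFinset ≤ Fintype.card V + ∑ v, (G.degree v - 2) := by
  classical
  obtain ⟨D, hD, hcard, hdeg⟩ := G.exists_deleteEdges_degree_le_two
  have hlf : IsLinearForest (G.deleteEdges D) :=
    ⟨hG.anti (deleteEdges_le _), fun v => (ndeg_eq_degree _ v).trans_le (hdeg v)⟩
  have hP := pathCoverNumber_le_numPaths (deleteEdges_le _) hlf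
  have hcount := hlf.numPaths_add_card_edgeFinset
  rw [edgeFinset_deleteEdges, card_sdiff_of_subset hD] at hcount
  have := card_le_card hD
  omega

lemma TwoSparse.le_pathCoverNumber_add_card_edgeFinset [DecidableRel G.Adj] (hG : TwoSparse G) :
    Fintype.card V + ∑ v, (G.degree v - 2) ≤ pathCoverNumber G + #G.edgeFinset := by
  classical
  obtain ⟨H, hle, hH, hP⟩ := exists_isMinPathCover G
  set I : Finset V := {v | 2 < G.degree v}
  have hI : G.IsIndepSet I := fun v hv w hw _ hadj => by
    simp only [I, coe_filter, mem_univ, true_and, Set.mem_ofPred_eq] at hv hw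
    have := hG v w hadj
    rw [ndeg_eq_degree, ndeg_eq_degree] at this
    omega
  have hheavy : ∑ v, (G.degree v - 2) = ∑ v ∈ I, (G.degree v - 2) :=
    (sum_filter_of_ne fun v _ h => by omega).symm
  have hloss : ∑ v ∈ I, (G.degree v - 2) ≤ ∑ v ∈ I, (G.degree v - H.degree v) :=
    sum_le_sum fun v _ => by have := (ndeg_eq_degree H v).symm.trans_le (hH.2 v); omega
  have hdel := hI.sum_degree_sub_le_card_edgeFinset_sub hle
  have hcount := hH.numPaths_add_card_edgeFinset
  have := card_le_card (edgeFinset_mono hle)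
  omega

lemma pathCoverNumber_add_card_edgeFinset_lt_of_adj [DecidableRel G.Adj] (hG : G.IsAcyclic)
    {u v : V} (huv : G.Adj u v) (hu : 2 < G.degree u) (hv : 2 < G.degree v) :
    pathCoverNumber G + #G.edgeFinset < Fintype.card V + ∑ w, (G.degree w - 2) := by
  classical
  have hle := G.deleteEdges_le {s(u, v)}
  have hP := pathCoverNumber_anti hle
  have hG' := pathCoverNumber_add_card_edgeFinset_le (hG.anti hle)
  have hsum := sum_degree_deleteEdges_sub_two_add_two_le huv hu hv
  have hedges := card_edgeFinset_deleteEdges_add_one huv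
  omega

/-- **Theorem (Statement 1).** Let `T` be a tree with `ℓ ≥ 2` leaves.
Then `T` is 2-sparse if and only if `P(T) = ℓ − 1`. -/
theorem tree_twoSparse_iff_pathCoverNumber {V : Type*} [Fintype V] (T : SimpleGraph V)
    (hT : T.IsTree) (hl : 2 ≤ numLeaves T) :
    TwoSparse T ↔ (pathCoverNumber T : ℤ) = numLeaves T - 1 := by
  classical
  have hleaves : ∑ v, (T.degree v - 2) + 2 = numLeaves T := by
    rw [numLeaves_eq_card_filter] at hl ⊢
    have : Nontrivial V := Fintype.one_lt_card_iff_nontrivial.mp <|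
      hl.trans_lt' one_lt_two |>.trans_le (card_filter_le _ _)
    exact hT.sum_degree_sub_two_add_two
  have hedges := hT.card_edgeFinset
  have hupper := pathCoverNumber_add_card_edgeFinset_le hT.isAcyclic
  refine ⟨fun hsp => ?_, fun hP => ?_⟩
  · have := hsp.le_pathCoverNumber_add_card_edgeFinset
    omega
  · by_contra hns
    obtain ⟨u, v, huv, hu, hv⟩ : ∃ u v, T.Adj u v ∧ 2 < T.degree u ∧ 2 < T.degree v := by
      simpa [TwoSparse, ndeg_eq_degree] using hns
    have := pathCoverNumber_add_card_edgeFinset_lt_of_adj hT.isAcyclic huv hu hv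
    omega

end PaperPC
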